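/- Let (F, G, ∂) be a quasi-abelian crossed module of groups. Then the homomorphism F → G/Z(G) sending f to the coset ∂(f)·Z(G) is surjective with kernel equal to Z(F); consequently ∂ induces a group isomorphism F/Z(F) ≅ G/Z(G), i.e., an isomorphism Inn(F) ≅ Inn(G). -/

import Mathlib

/-!
Write `φ : F → G ⧸ Z(G)` for `f ↦ ∂(f) Z(G)`. It is surjective because `G = ∂(F) Z(G)`.
Its kernel is `Z(F)`: an element of `Z(F)` has image commuting with `∂(F)`, hence with
`∂(F) Z(G) = G`; conversely, if `∂ f` is central then condition (iii) writes `∂ f = ∂ f₀`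
with `f₀ ∈ Z(F)`, and `f f₀⁻¹ ∈ ker ∂` is central by the second Peiffer identity, since
`f' = ∂ k • f' = k f' k⁻¹` for `k ∈ ker ∂`. The isomorphism is then the first isomorphism theorem.
-/

open Subgroup QuotientGroup

section

variable {F G : Type*} [Group F] [Group G]

theorem MonoidHom.ker_le_center_of_smul_eq_conj [MulAction G F] (d : F →* G)
    (hpeiffer : ∀ f f' : F, d f • f' = f * f' * f⁻¹) : d.ker ≤ center F := by
  intro k hk
  rw [mem_center_iff]
  intro f'
  have hconj := hpeiffer k f'
  rw [d.mem_ker.mp hk, one_smul] at hconj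
  exact eq_mul_inv_iff_mul_eq.mp hconj

theorem mem_center_of_forall_commute_of_forall_eq_mul (d : F →* G)
    (hG : ∀ g : G, ∃ f : F, ∃ z ∈ center G, g = d f * z) {x : G}
    (hx : ∀ f : F, Commute x (d f)) : x ∈ center G := by
  rw [mem_center_iff]
  intro g
  obtain ⟨f, z, hz, rfl⟩ := hG g
  exact (hx f).symm.mul_left (mem_center_iff.mp hz x).symm

theorem MonoidHom.map_mem_center_of_forall_eq_mul (d : F →* G)
    (hG : ∀ g : G, ∃ f : F, ∃ z ∈ center G, g = d f * z) {f : F} (hf : f ∈ center F) :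
    d f ∈ center G :=
  mem_center_of_forall_commute_of_forall_eq_mul d hG fun f' =>
    Commute.map (mem_center_iff.mp hf f').symm d

theorem surjective_mk'_comp_of_forall_eq_mul {N : Subgroup G} [N.Normal] (d : F →* G)
    (hG : ∀ g : G, ∃ f : F, ∃ z ∈ N, g = d f * z) :
    Function.Surjective ((mk' N).comp d) := by
  intro q
  obtain ⟨g, rfl⟩ := mk'_surjective N q
  obtain ⟨f, z, hz, rfl⟩ := hG g
  refine ⟨f, ?_⟩
  simp only [MonoidHom.comp_apply, mk'_apply, mk_mul, (eq_one_iff z).mpr hz, mul_one]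

theorem ker_mk'_center_comp_eq_center [MulAction G F] (d : F →* G)
    (hpeiffer : ∀ f f' : F, d f • f' = f * f' * f⁻¹)
    (hG : ∀ g : G, ∃ f : F, ∃ z ∈ center G, g = d f * z)
    (hZ : ∀ x : G, x ∈ d.range → (∀ y ∈ d.range, Commute x y) →
      ∃ f ∈ center F, d f = x) :
    ((mk' (center G)).comp d).ker = center F := by
  ext f
  rw [MonoidHom.mem_ker, MonoidHom.comp_apply, mk'_apply, eq_one_iff]
  constructor
  · intro hdf
    obtain ⟨f₀, hf₀, hdf₀⟩ :=
      hZ (d f) ⟨f, rfl⟩ fun y _ => (mem_center_iff.mp hdf y).symm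
    have hker : f * f₀⁻¹ ∈ d.ker := by
      rw [MonoidHom.mem_ker, map_mul, map_inv, hdf₀, mul_inv_cancel]
    exact ((center F).mul_mem_cancel_right (inv_mem hf₀)).mp
      (d.ker_le_center_of_smul_eq_conj hpeiffer hker)
  · exact d.map_mem_center_of_forall_eq_mul hG

end

theorem quasiAbelian_inn_mulEquiv_inn_general {F G : Type*} [Group F] [Group G]
    [MulDistribMulAction G F] (d : F →* G)
    (hpeiffer2 : ∀ f f' : F, d f • f' = f * f' * f⁻¹)
    (hqa2 : ∀ g : G, ∃ f : F, ∃ z ∈ Subgroup.center G, g = d f * z)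
    (hqa3 : ∀ x : G, x ∈ d.range → (∀ y ∈ d.range, Commute x y) →
      ∃ f ∈ Subgroup.center F, d f = x) :
    Function.Surjective ((QuotientGroup.mk' (Subgroup.center G)).comp d) ∧
    ((QuotientGroup.mk' (Subgroup.center G)).comp d).ker = Subgroup.center F ∧
    ∃ e : (F ⧸ Subgroup.center F) ≃* (G ⧸ Subgroup.center G),
      ∀ f : F, e (QuotientGroup.mk f) = QuotientGroup.mk (d f) := by
  have hsurj := surjective_mk'_comp_of_forall_eq_mul d hqa2
  have hker := ker_mk'_center_comp_eq_center d hpeiffer2 hqa2 hqa3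
  exact ⟨hsurj, hker,
    (quotientMulEquivOfEq hker.symm).trans (quotientKerEquivOfSurjective _ hsurj), fun _ => rfl⟩

/-- Let `(F, G, ∂)` be a quasi-abelian crossed module of groups:
(i) the center of `G` acts trivially on `F`; (ii) `G = ∂(F) · Z(G)`; (iii) every element
of the center of the subgroup `∂(F)` is the image under `∂` of an element of `Z(F)`.
Then the homomorphism `F → G ⧸ Z(G)`, `f ↦ ∂(f)·Z(G)`, is surjective with kernel equal
to `Z(F)`; consequently `∂` induces a group isomorphism
`F ⧸ Z(F) ≃* G ⧸ Z(G)`, i.e. an isomorphism `Inn(F) ≃* Inn(G)`. -/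
theorem quasiAbelian_inn_mulEquiv_inn {F G : Type*} [Group F] [Group G]
    [MulDistribMulAction G F] (d : F →* G)
    (hpeiffer1 : ∀ (g : G) (f : F), d (g • f) = g * d f * g⁻¹)
    (hpeiffer2 : ∀ f f' : F, d f • f' = f * f' * f⁻¹)
    (hqa1 : ∀ z ∈ Subgroup.center G, ∀ f : F, z • f = f)
    (hqa2 : ∀ g : G, ∃ f : F, ∃ z ∈ Subgroup.center G, g = d f * z)
    (hqa3 : ∀ x : G, x ∈ d.range → (∀ y ∈ d.range, Commute x y) →
      ∃ f ∈ Subgroup.center F, d f = x) :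
    Function.Surjective ((QuotientGroup.mk' (Subgroup.center G)).comp d) ∧
    ((QuotientGroup.mk' (Subgroup.center G)).comp d).ker = Subgroup.center F ∧
    ∃ e : (F ⧸ Subgroup.center F) ≃* (G ⧸ Subgroup.center G),
      ∀ f : F, e (QuotientGroup.mk f) = QuotientGroup.mk (d f) :=
  quasiAbelian_inn_mulEquiv_inn_general d hpeiffer2 hqa2 hqa3
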